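/- Let i ≥ 1, let w be a word belonging to J_l for some l ≥ 1, and let c_1, ..., c_i be letters with c_j ≠ a_1 for every 1 ≤ j ≤ i. Then β_{i+4}(w c_1 ⋯ c_i) = i + 3. (Lemma 5.5(iii) of the paper.) -/

import Mathlib

/-- The Jacquard languages: `Jacquard 0 = {ε}`, `Jacquard 1 = {a₀}`, and, for `n ≥ 2`,
`Jacquard n = Jacquard (n-1)·a₀ ∪ ⋃_{1 ≤ j ≤ n-1} Jacquard (n-j)·(a₁a₂⋯a_j)`,
where a letter `a_j` is modeled by the natural number `j` and a word by a list. -/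
def Jacquard : ℕ → Set (List ℕ)
  | 0 => {[]}
  | 1 => {[0]}
  | n + 2 =>
      ((· ++ [0]) '' Jacquard (n + 1)) ∪
        ⋃ (j : ℕ) (_ : 1 ≤ j ∧ j ≤ n + 1),
          (· ++ (List.range j).map (· + 1)) '' Jacquard (n + 2 - j)
  termination_by n => n
  decreasing_by all_goals omega

/-- Jean's functions `β_i` on words (the shift `w'` of a word is `w.dropLast`):
`β₂ = 1`, `β₃ = 2`, `β₄ = 3`, and, for `i ≥ 5`,
`β_i(w) = β_{i-1}(w') + β_{i-2}(w'')` if the last letter of `w` is `a₁`,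
`β_i(w) = 2β_{i-1}(w') - β_{i-2}(w'')` if the last letter of `w` is `a_k`, `k ≥ 2`,
`β_i(w) = β_{i-1}(w') + 1` otherwise (i.e. `w` empty or ending with `a₀`).
(The unused values `β₀` and `β₁` are set to `0`.) -/
def beta : ℕ → List ℕ → ℤ
  | 0, _ => 0
  | 1, _ => 0
  | 2, _ => 1
  | 3, _ => 2
  | 4, _ => 3
  | i + 5, w =>
      match w.getLast? with
      | some 1 => beta (i + 4) w.dropLast + beta (i + 3) w.dropLast.dropLast
      | some (_ + 2) => 2 * beta (i + 4) w.dropLast - beta (i + 3) w.dropLast.dropLast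
      | _ => beta (i + 4) w.dropLast + 1

theorem beta_concat_of_ne_one {n : ℕ} {w : List ℕ} {a : ℕ} (ha : a ≠ 1)
    (h₁ : beta (n + 4) w = n + 3) (h₂ : beta (n + 3) w.dropLast = n + 2) :
    beta (n + 5) (w ++ [a]) = n + 4 := by
  rw [beta, List.getLast?_concat, List.dropLast_concat]
  rcases a with _ | _ | k
  · simp only [h₁]; ring
  · exact absurd rfl ha
  · simp only [h₁, h₂]; ring

/-- The second conjunct is what lets the induction pass a letter `a_k`, `k ≥ 2`, whose rule
looks two letters back. -/
theorem beta_append_of_forall_ne_one (w c : List ℕ) (hc : ∀ x ∈ c, x ≠ 1) :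
    beta (c.length + 4) (w ++ c) = c.length + 3 ∧
      beta (c.length + 3) (w ++ c).dropLast = c.length + 2 := by
  induction c using List.reverseRecOn with
  | nil => exact ⟨rfl, rfl⟩
  | append_singleton c a ih =>
    have hc' : ∀ x ∈ c, x ≠ 1 := fun x hx => hc x (by simp [hx])
    obtain ⟨h₁, h₂⟩ := ih hc'
    rw [← List.append_assoc, List.length_append, List.length_singleton, List.dropLast_concat]
    push_cast
    exact ⟨beta_concat_of_ne_one (hc a (by simp)) h₁ h₂, by rw [h₁]; ring⟩

theorem beta_append_no_ones_general (i : ℕ) (w : List ℕ) (c : List ℕ)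
    (hc : c.length = i) (hc1 : ∀ x ∈ c, x ≠ 1) :
    beta (i + 4) (w ++ c) = (i : ℤ) + 3 := by
  subst hc
  exact (beta_append_of_forall_ne_one w c hc1).1

/-- Lemma 5.5(iii): for `i ≥ 1`, any word `w` in some Jacquard language `J_l`, `l ≥ 1`,
and any letters `c₁, …, c_i` all different from `a₁`, `β_{i+4}(w c₁⋯c_i) = i + 3`. -/
theorem beta_append_no_ones (i : ℕ) (hi : 1 ≤ i) (l : ℕ) (hl : 1 ≤ l)
    (w : List ℕ) (hw : w ∈ Jacquard l)
    (c : List ℕ) (hc : c.length = i) (hc1 : ∀ x ∈ c, x ≠ 1) :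
    beta (i + 4) (w ++ c) = (i : ℤ) + 3 :=
  beta_append_no_ones_general i w c hc hc1
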